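/- arXiv:2305.00180 — 2 statements merged into one kernel-verified Lean document; each statement's English description precedes it below -/
import Mathlib

section
/- Let $p,q,r>1$, $T>0$, $R\ge1$, and let $u,w\in C(\mathbf{R}\times[0,T])$ satisfy $u(x,t)=w(x,t)=0$ whenever $|x|>t+R$. Then there exists a constant $C>0$, independent of $T$, $u$ and $w$, such that: $\|L(|w|^p|u|^q)\|_1\le C\|w\|_2^p\|u\|_1^q(T+R)$; $\|L(|u|^r)\|_1\le C\|u\|_1^r(T+R)^2$; $\|L'(|w|^p|u|^q)\|_2\le C\|w\|_2^p\|u\|_1^q(T+R)$; $\|L'(|u|^r)\|_2\le C\|u\|_1^r(T+R)^2$; $\|L'(|w|^p|u|^q)\|_1\le C\|w\|_2^p\|u\|_1^q(T+R)$; and $\|L'(|u|^r)\|_1\le C\|u\|_1^r(T+R)^2$. -/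
/-!
The estimates for `|u| ^ r` only use `|u| ≤ ‖u‖₁` and the size of the domain of integration. For
`|w| ^ p * |u| ^ q`, the weight `ω = t - |x| + 2R` is at least `R ≥ 1` on the cone `|x| ≤ t + R`
carrying the data, so there `|w| ^ p ≤ ‖w‖₂ ^ p * ω ^ (-p)`. As `ω(y, s)` is the smaller of
`s + 2R - y` and `s + 2R + y`, the function `ω ^ (-p)` is dominated on the cone by the sum of two
translates of `v ↦ v ^ (-p)` cut off below `1`. Each translate has integral `1 / (p - 1)` along
horizontal lines, which bounds `L`. Along the characteristic `y = x + t - s`, one translate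
integrates to at most `1 / (2 (p - 1))` and the other is the constant `(x + t + 2R) ^ (-p)`,
which `ω(x, t)` compensates since `ω(x, t) ≤ x + t + 2R`; this bounds `ω L'`. Off the cone, `L'`
vanishes.
-/

open Set MeasureTheory

noncomputable section

/-- The Duhamel operator `L`. -/
def Lop (v : ℝ → ℝ → ℝ) (x t : ℝ) : ℝ :=
  (1 / 2) * ∫ s in (0:ℝ)..t, (∫ y in (x - t + s)..(x + t - s), v y s)

/-- The Duhamel operator `L'`. -/
def Lop' (v : ℝ → ℝ → ℝ) (x t : ℝ) : ℝ :=
  (1 / 2) * ∫ s in (0:ℝ)..t, (v (x + t - s) s + v (x - t + s) s)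

/-- The sup-norm `‖·‖₁` over `ℝ × [0,T]`. -/
def norm1 (T : ℝ) (u : ℝ → ℝ → ℝ) : ℝ :=
  ⨆ z : ℝ × ↥(Icc (0:ℝ) T), |u z.1 (z.2 : ℝ)|

/-- The weighted sup-norm `‖·‖₂` over `ℝ × [0,T]` with weight `t - |x| + 2R`. -/
def norm2 (R T : ℝ) (w : ℝ → ℝ → ℝ) : ℝ :=
  ⨆ z : ℝ × ↥(Icc (0:ℝ) T), |((z.2 : ℝ) - |z.1| + 2 * R) * w z.1 (z.2 : ℝ)|

def cutoffRpow (p : ℝ) : ℝ → ℝ := (Ici 1).indicator fun v => v ^ (-p)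

namespace cutoffRpow

variable {p : ℝ}

lemma nonneg (p v : ℝ) : 0 ≤ cutoffRpow p v :=
  indicator_nonneg (fun _ hv => Real.rpow_nonneg (zero_le_one.trans hv) _) v

lemma eq_rpow {v : ℝ} (hv : 1 ≤ v) : cutoffRpow p v = v ^ (-p) := indicator_of_mem hv _

lemma eq_zero {v : ℝ} (hv : v < 1) : cutoffRpow p v = 0 := indicator_of_notMem (not_le.2 hv) _

lemma le_one (hp : 0 ≤ p) (v : ℝ) : cutoffRpow p v ≤ 1 := by
  by_cases hv : 1 ≤ v
  · rw [eq_rpow hv]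
    exact Real.rpow_le_one_of_one_le_of_nonpos hv (neg_nonpos.2 hp)
  · rw [eq_zero (not_le.1 hv)]
    exact zero_le_one

lemma mul_le_one (hp : 1 ≤ p) {a v : ℝ} (hav : a ≤ v) : a * cutoffRpow p v ≤ 1 := by
  by_cases hv : 1 ≤ v
  · have hv0 : 0 < v := zero_lt_one.trans_le hv
    calc a * cutoffRpow p v ≤ v * v ^ (-p) := by
          rw [eq_rpow hv]; exact mul_le_mul_of_nonneg_right hav (Real.rpow_nonneg hv0.le _)
      _ = v ^ (1 - p) := by rw [sub_eq_add_neg, Real.rpow_add hv0, Real.rpow_one]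
      _ ≤ 1 := Real.rpow_le_one_of_one_le_of_nonpos hv (by linarith)
  · rw [eq_zero (not_le.1 hv), mul_zero]
    exact zero_le_one

lemma integrable (hp : 1 < p) : Integrable (cutoffRpow p) := by
  rw [cutoffRpow, integrable_indicator_iff measurableSet_Ici, integrableOn_Ici_iff_integrableOn_Ioi]
  exact integrableOn_Ioi_rpow_of_lt (by linarith) zero_lt_one

lemma integral_eq (hp : 1 < p) : ∫ v, cutoffRpow p v = 1 / (p - 1) := by
  rw [cutoffRpow, integral_indicator measurableSet_Ici, integral_Ici_eq_integral_Ioi,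
    integral_Ioi_rpow_of_lt (by linarith) zero_lt_one, Real.one_rpow]
  rw [show -p + 1 = -(p - 1) by ring, div_neg, neg_div, neg_neg]

lemma integrable_comp_mul_add (hp : 1 < p) {a : ℝ} (ha : a ≠ 0) (b : ℝ) :
    Integrable fun v => cutoffRpow p (a * v + b) :=
  ((integrable hp).comp_add_right b).comp_mul_left' ha

lemma integral_comp_mul_add (hp : 1 < p) (a b : ℝ) :
    ∫ v, cutoffRpow p (a * v + b) = |a⁻¹| / (p - 1) := by
  rw [Measure.integral_comp_mul_left (fun v => cutoffRpow p (v + b)), integral_add_right_eq_self,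
    integral_eq hp, smul_eq_mul, mul_one_div]

end cutoffRpow

def coneEnvelope (p R y s : ℝ) : ℝ := cutoffRpow p (s + 2 * R - y) + cutoffRpow p (s + 2 * R + y)

namespace coneEnvelope

variable {p R : ℝ}

lemma nonneg (p R y s : ℝ) : 0 ≤ coneEnvelope p R y s :=
  add_nonneg (cutoffRpow.nonneg _ _) (cutoffRpow.nonneg _ _)

lemma le_two (hp : 0 ≤ p) (y s : ℝ) : coneEnvelope p R y s ≤ 2 := by
  rw [coneEnvelope]
  linarith [cutoffRpow.le_one hp (s + 2 * R - y), cutoffRpow.le_one hp (s + 2 * R + y)]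

lemma neg (p R y s : ℝ) : coneEnvelope p R (-y) s = coneEnvelope p R y s := by
  rw [coneEnvelope, coneEnvelope, sub_neg_eq_add, ← sub_eq_add_neg, add_comm]

lemma rpow_weight_le {y s : ℝ} (h : 1 ≤ s - |y| + 2 * R) :
    (s - |y| + 2 * R) ^ (-p) ≤ coneEnvelope p R y s := by
  rcases le_total 0 y with hy | hy
  · rw [abs_of_nonneg hy, show s - y + 2 * R = s + 2 * R - y by ring] at h ⊢
    rw [← cutoffRpow.eq_rpow h]
    exact le_add_of_nonneg_right (cutoffRpow.nonneg _ _)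
  · rw [abs_of_nonpos hy, show s - -y + 2 * R = s + 2 * R + y by ring] at h ⊢
    rw [← cutoffRpow.eq_rpow h]
    exact le_add_of_nonneg_left (cutoffRpow.nonneg _ _)

lemma integrable (hp : 1 < p) (R s : ℝ) : Integrable fun y => coneEnvelope p R y s :=
  ((cutoffRpow.integrable hp).comp_sub_left _).add ((cutoffRpow.integrable hp).comp_add_left _)

lemma integral_eq (hp : 1 < p) (R s : ℝ) : ∫ y, coneEnvelope p R y s = 2 / (p - 1) := by
  simp only [coneEnvelope]
  rw [integral_add ((cutoffRpow.integrable hp).comp_sub_left _)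
      ((cutoffRpow.integrable hp).comp_add_left _), integral_sub_left_eq_self,
    integral_add_left_eq_self, cutoffRpow.integral_eq hp]
  ring

lemma characteristic_eq (p R x t s : ℝ) : coneEnvelope p R (x + t - s) s
    = cutoffRpow p (2 * s + (2 * R - (x + t))) + cutoffRpow p (x + t + 2 * R) := by
  rw [coneEnvelope]
  congr 2 <;> ring

lemma characteristic_reflect (p R x t s : ℝ) :
    coneEnvelope p R (x - t + s) s = coneEnvelope p R (-x + t - s) s := by
  rw [← neg]
  congr 1
  ring

lemma intervalIntegrable_characteristic (hp : 1 < p) (R x t a b : ℝ) :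
    IntervalIntegrable (fun s => coneEnvelope p R (x + t - s) s) volume a b := by
  simp_rw [characteristic_eq]
  exact (cutoffRpow.integrable_comp_mul_add hp two_ne_zero _).intervalIntegrable.add
    intervalIntegrable_const

lemma weight_mul_integral_characteristic_le (hp : 1 < p) {x t : ℝ} (ht : 0 ≤ t)
    (hω : 0 ≤ t - |x| + 2 * R) :
    (t - |x| + 2 * R) * ∫ s in (0)..t, coneEnvelope p R (x + t - s) s ≤ (t + R) / (p - 1) + t := by
  have hI := cutoffRpow.integrable_comp_mul_add hp two_ne_zero (2 * R - (x + t))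
  have hfar : ∫ s in (0)..t, cutoffRpow p (2 * s + (2 * R - (x + t))) ≤ 1 / (2 * (p - 1)) :=
    calc ∫ s in (0)..t, cutoffRpow p (2 * s + (2 * R - (x + t)))
        ≤ ∫ s, cutoffRpow p (2 * s + (2 * R - (x + t))) := by
          rw [intervalIntegral.integral_of_le ht]
          exact setIntegral_le_integral hI
            (Filter.Eventually.of_forall fun _ => cutoffRpow.nonneg _ _)
      _ = 1 / (2 * (p - 1)) := by
          rw [cutoffRpow.integral_comp_mul_add hp, abs_of_pos (by norm_num), ← one_div, div_div]
  have hnear : (t - |x| + 2 * R) * (t * cutoffRpow p (x + t + 2 * R)) ≤ t := by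
    rw [mul_left_comm]
    exact mul_le_of_le_one_right ht (cutoffRpow.mul_le_one hp.le (by linarith [neg_abs_le x]))
  have hfar_nonneg : 0 ≤ ∫ s in (0)..t, cutoffRpow p (2 * s + (2 * R - (x + t))) :=
    intervalIntegral.integral_nonneg ht fun _ _ => cutoffRpow.nonneg _ _
  have hω_le : t - |x| + 2 * R ≤ 2 * (t + R) := by linarith [abs_nonneg x]
  simp_rw [characteristic_eq]
  rw [intervalIntegral.integral_add hI.intervalIntegrable intervalIntegrable_const,
    intervalIntegral.integral_const, smul_eq_mul, sub_zero, mul_add]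
  calc _ ≤ 2 * (t + R) * (1 / (2 * (p - 1))) + t :=
        add_le_add (mul_le_mul hω_le hfar hfar_nonneg (by linarith)) hnear
    _ = (t + R) / (p - 1) + t := by field_simp

end coneEnvelope

structure IsConeSupported (R T : ℝ) (u : ℝ → ℝ → ℝ) : Prop where
  continuousOn : ContinuousOn (fun z : ℝ × ℝ => u z.1 z.2) ((univ : Set ℝ) ×ˢ Icc 0 T)
  eq_zero : ∀ x t, t ∈ Icc 0 T → t + R < |x| → u x t = 0

section Norms

variable {R T : ℝ} {v : ℝ → ℝ → ℝ}

lemma norm1_nonneg : 0 ≤ norm1 T v := Real.iSup_nonneg fun _ => abs_nonneg _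

lemma norm2_nonneg : 0 ≤ norm2 R T v := Real.iSup_nonneg fun _ => abs_nonneg _

lemma norm1_le {B : ℝ} (hB : 0 ≤ B) (h : ∀ x t, t ∈ Icc 0 T → |v x t| ≤ B) : norm1 T v ≤ B :=
  Real.iSup_le (fun z => h z.1 z.2 z.2.2) hB

lemma norm2_le {B : ℝ} (hB : 0 ≤ B) (h : ∀ x t, t ∈ Icc 0 T → |(t - |x| + 2 * R) * v x t| ≤ B) :
    norm2 R T v ≤ B :=
  Real.iSup_le (fun z => h z.1 z.2 z.2.2) hB

namespace IsConeSupported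

lemma exists_abs_le (hv : IsConeSupported R T v) : ∃ B, ∀ x t, t ∈ Icc 0 T → |v x t| ≤ B := by
  obtain ⟨B, hB⟩ := (isCompact_Icc.prod isCompact_Icc).exists_bound_of_continuousOn
    (hv.continuousOn.mono (prod_mono (subset_univ (Icc (-(T + R)) (T + R))) le_rfl))
  refine ⟨max B 0, fun x t ht => ?_⟩
  by_cases hx : |x| ≤ T + R
  · exact (hB (x, t) ⟨abs_le.1 hx, ht⟩).trans (le_max_left _ _)
  · rw [hv.eq_zero x t ht (by linarith [ht.2]), abs_zero]
    exact le_max_right _ _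

lemma abs_le_norm1 (hv : IsConeSupported R T v) {x t : ℝ} (ht : t ∈ Icc 0 T) :
    |v x t| ≤ norm1 T v := by
  obtain ⟨B, hB⟩ := hv.exists_abs_le
  exact le_ciSup (f := fun z : ℝ × Icc (0 : ℝ) T => |v z.1 z.2|)
    ⟨B, forall_mem_range.2 fun z => hB z.1 z.2 z.2.2⟩ (x, ⟨t, ht⟩)

lemma abs_weight_mul_le_norm2 (hR : 0 ≤ R) (hv : IsConeSupported R T v) {x t : ℝ}
    (ht : t ∈ Icc 0 T) : |(t - |x| + 2 * R) * v x t| ≤ norm2 R T v := by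
  obtain ⟨B, hB⟩ := hv.exists_abs_le
  have hbdd : ∀ x t, t ∈ Icc 0 T → |(t - |x| + 2 * R) * v x t| ≤ (T + 2 * R) * B := by
    intro x t ht
    by_cases hx : |x| ≤ t + R
    · rw [abs_mul]
      exact mul_le_mul (abs_le.2 ⟨by linarith [ht.1, ht.2], by linarith [abs_nonneg x, ht.2]⟩)
        (hB x t ht) (abs_nonneg _) (by linarith [ht.1, ht.2])
    · rw [hv.eq_zero x t ht (not_le.1 hx), mul_zero, abs_zero]
      exact mul_nonneg (by linarith [ht.1, ht.2]) ((abs_nonneg _).trans (hB x t ht))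
  exact le_ciSup (f := fun z : ℝ × Icc (0 : ℝ) T => |(z.2 - |z.1| + 2 * R) * v z.1 z.2|)
    ⟨_, forall_mem_range.2 fun z => hbdd z.1 z.2 z.2.2⟩ (x, ⟨t, ht⟩)

end IsConeSupported

end Norms

section Duhamel

variable {R T : ℝ} {G : ℝ → ℝ → ℝ} {x t : ℝ}

lemma Lop'_eq_zero_of_lt_abs (hG : ∀ y s, s ∈ Icc 0 T → s + R < |y| → G y s = 0)
    (ht : t ∈ Icc 0 T) (hx : t + R < |x|) : Lop' G x t = 0 := by
  rw [Lop', intervalIntegral.integral_congr (g := fun _ => (0 : ℝ)), intervalIntegral.integral_zero,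
    mul_zero]
  intro s hs
  rw [uIcc_of_le ht.1] at hs
  have hsT : s ∈ Icc 0 T := ⟨hs.1, hs.2.trans ht.2⟩
  have h₁ := abs_add_le (x + t - s) (s - t)
  have h₂ := abs_sub (x - t + s) (s - t)
  rw [show x + t - s + (s - t) = x by ring, abs_of_nonpos (sub_nonpos.2 hs.2)] at h₁
  rw [show x - t + s - (s - t) = x by ring, abs_of_nonpos (sub_nonpos.2 hs.2)] at h₂
  show G (x + t - s) s + G (x - t + s) s = 0
  rw [hG _ s hsT (by linarith), hG _ s hsT (by linarith), add_zero]

lemma abs_Lop_le_of_slice {K : ℝ} (ht : 0 ≤ t)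
    (hK : ∀ s ∈ Icc 0 t, |∫ y in (x - t + s)..(x + t - s), G y s| ≤ K) :
    |Lop G x t| ≤ K * t / 2 := by
  have h := intervalIntegral.norm_integral_le_of_norm_le_const (a := 0) (b := t)
    (f := fun s => ∫ y in (x - t + s)..(x + t - s), G y s) fun s hs => by
      rw [uIoc_of_le ht] at hs
      exact hK s (Ioc_subset_Icc_self hs)
  rw [Lop, abs_mul, abs_of_pos one_half_pos]
  rw [Real.norm_eq_abs, sub_zero, abs_of_nonneg ht] at h
  linarith

lemma abs_Lop_le_of_bound {B : ℝ} (hG : ∀ y s, s ∈ Icc 0 T → |G y s| ≤ B)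
    (ht : t ∈ Icc 0 T) : |Lop G x t| ≤ B * t ^ 2 := by
  have hB : 0 ≤ B := (abs_nonneg _).trans (hG 0 0 ⟨le_rfl, ht.1.trans ht.2⟩)
  refine (abs_Lop_le_of_slice ht.1 (K := 2 * B * t) fun s hs => ?_).trans_eq (by ring)
  have h := intervalIntegral.norm_integral_le_of_norm_le_const (a := x - t + s) (b := x + t - s)
    (f := fun y => G y s) fun y _ => hG y s ⟨hs.1, hs.2.trans ht.2⟩
  rw [Real.norm_eq_abs, show x + t - s - (x - t + s) = 2 * (t - s) by ring,
    abs_of_nonneg (show 0 ≤ 2 * (t - s) by linarith [hs.2])] at h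
  nlinarith [hs.1]

lemma abs_Lop'_le_of_bound {B : ℝ} (hG : ∀ y s, s ∈ Icc 0 T → |G y s| ≤ B)
    (ht : t ∈ Icc 0 T) : |Lop' G x t| ≤ B * t := by
  have h := intervalIntegral.norm_integral_le_of_norm_le_const (a := 0) (b := t) (C := 2 * B)
    (f := fun s => G (x + t - s) s + G (x - t + s) s) fun s hs => by
      rw [uIoc_of_le ht.1] at hs
      have hsT : s ∈ Icc 0 T := ⟨hs.1.le, hs.2.trans ht.2⟩
      refine (norm_add_le _ _).trans ?_
      rw [Real.norm_eq_abs, Real.norm_eq_abs]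
      linarith [hG (x + t - s) s hsT, hG (x - t + s) s hsT]
  rw [Lop', abs_mul, abs_of_pos one_half_pos]
  rw [Real.norm_eq_abs, sub_zero, abs_of_nonneg ht.1] at h
  linarith

variable {p M : ℝ}

lemma abs_Lop_le_of_envelope (hp : 1 < p) (hM : 0 ≤ M) (hG0 : ∀ y s, 0 ≤ G y s)
    (hG : ∀ y s, s ∈ Icc 0 T → G y s ≤ M * coneEnvelope p R y s) (ht : t ∈ Icc 0 T) :
    |Lop G x t| ≤ M * (t / (p - 1)) := by
  refine (abs_Lop_le_of_slice ht.1 (K := M * (2 / (p - 1))) fun s hs => ?_).trans_eq (by ring)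
  have hsT : s ∈ Icc 0 T := ⟨hs.1, hs.2.trans ht.2⟩
  have hab : x - t + s ≤ x + t - s := by linarith [hs.2]
  have hI := (coneEnvelope.integrable hp R s).const_mul M
  rw [abs_of_nonneg (intervalIntegral.integral_nonneg hab fun y _ => hG0 y s),
    intervalIntegral.integral_of_le hab]
  calc ∫ y in Ioc (x - t + s) (x + t - s), G y s
      ≤ ∫ y in Ioc (x - t + s) (x + t - s), M * coneEnvelope p R y s :=
        integral_mono_of_nonneg (Filter.Eventually.of_forall fun y => hG0 y s) hI.integrableOn
          (Filter.Eventually.of_forall fun y => hG y s hsT)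
    _ ≤ ∫ y, M * coneEnvelope p R y s :=
        setIntegral_le_integral hI
          (Filter.Eventually.of_forall fun y => mul_nonneg hM (coneEnvelope.nonneg _ _ _ _))
    _ = M * (2 / (p - 1)) := by rw [integral_const_mul, coneEnvelope.integral_eq hp]

lemma weight_mul_Lop'_le_of_envelope (hp : 1 < p) (hM : 0 ≤ M) (hG0 : ∀ y s, 0 ≤ G y s)
    (hG : ∀ y s, s ∈ Icc 0 T → G y s ≤ M * coneEnvelope p R y s) (ht : t ∈ Icc 0 T)
    (hω : 0 ≤ t - |x| + 2 * R) :
    (t - |x| + 2 * R) * Lop' G x t ≤ M * ((t + R) / (p - 1) + t) := by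
  have hI₁ := coneEnvelope.intervalIntegrable_characteristic hp R x t 0 t
  have hI₂ := coneEnvelope.intervalIntegrable_characteristic hp R (-x) t 0 t
  simp_rw [← coneEnvelope.characteristic_reflect] at hI₂
  have hmono : ∫ s in (0)..t, (G (x + t - s) s + G (x - t + s) s)
      ≤ M * ((∫ s in (0)..t, coneEnvelope p R (x + t - s) s)
        + ∫ s in (0)..t, coneEnvelope p R (x - t + s) s) := by
    rw [← intervalIntegral.integral_add hI₁ hI₂, ← intervalIntegral.integral_const_mul,
      intervalIntegral.integral_of_le ht.1, intervalIntegral.integral_of_le ht.1]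
    refine integral_mono_of_nonneg
      (Filter.Eventually.of_forall fun s => add_nonneg (hG0 _ _) (hG0 _ _))
      ((hI₁.add hI₂).1.const_mul M)
      (ae_restrict_of_forall_mem measurableSet_Ioc fun s hs => ?_)
    have hsT : s ∈ Icc 0 T := ⟨hs.1.le, hs.2.trans ht.2⟩
    simp only [mul_add]
    exact add_le_add (hG _ s hsT) (hG _ s hsT)
  have h₁ := coneEnvelope.weight_mul_integral_characteristic_le (R := R) hp (x := x) ht.1 hω
  have h₂ := coneEnvelope.weight_mul_integral_characteristic_le (R := R) hp (x := -x) ht.1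
    (by rwa [abs_neg])
  simp_rw [abs_neg, ← coneEnvelope.characteristic_reflect] at h₂
  rw [Lop']
  calc (t - |x| + 2 * R) * (1 / 2 * ∫ s in (0)..t, (G (x + t - s) s + G (x - t + s) s))
      ≤ (t - |x| + 2 * R) * (1 / 2 * (M * ((∫ s in (0)..t, coneEnvelope p R (x + t - s) s)
        + ∫ s in (0)..t, coneEnvelope p R (x - t + s) s))) := by gcongr
    _ = M / 2 * ((t - |x| + 2 * R) * (∫ s in (0)..t, coneEnvelope p R (x + t - s) s)
        + (t - |x| + 2 * R) * ∫ s in (0)..t, coneEnvelope p R (x - t + s) s) := by ring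
    _ ≤ M / 2 * (((t + R) / (p - 1) + t) + ((t + R) / (p - 1) + t)) := by gcongr
    _ = M * ((t + R) / (p - 1) + t) := by ring

end Duhamel

section Estimates

variable {p R T M B : ℝ} {G : ℝ → ℝ → ℝ}

lemma Lop'_nonneg (hG0 : ∀ y s, 0 ≤ G y s) {x t : ℝ} (ht : 0 ≤ t) : 0 ≤ Lop' G x t :=
  mul_nonneg one_half_pos.le
    (intervalIntegral.integral_nonneg ht fun _ _ => add_nonneg (hG0 _ _) (hG0 _ _))

lemma norm1_Lop_le_of_bound (hT : 0 ≤ T) (hG : ∀ y s, s ∈ Icc 0 T → |G y s| ≤ B) :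
    norm1 T (Lop G) ≤ B * T ^ 2 := by
  have hB : 0 ≤ B := (abs_nonneg _).trans (hG 0 0 ⟨le_rfl, hT⟩)
  refine norm1_le (by positivity) fun x t ht => (abs_Lop_le_of_bound hG ht).trans ?_
  gcongr
  exacts [ht.1, ht.2]

lemma norm1_Lop'_le_of_bound (hT : 0 ≤ T) (hG : ∀ y s, s ∈ Icc 0 T → |G y s| ≤ B) :
    norm1 T (Lop' G) ≤ B * T := by
  have hB : 0 ≤ B := (abs_nonneg _).trans (hG 0 0 ⟨le_rfl, hT⟩)
  exact norm1_le (by positivity) fun x t ht =>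
    (abs_Lop'_le_of_bound hG ht).trans (mul_le_mul_of_nonneg_left ht.2 hB)

lemma norm2_Lop'_le_of_bound (hR : 0 ≤ R) (hT : 0 ≤ T)
    (hG : ∀ y s, s ∈ Icc 0 T → |G y s| ≤ B)
    (hG_supp : ∀ y s, s ∈ Icc 0 T → s + R < |y| → G y s = 0) :
    norm2 R T (Lop' G) ≤ B * T * (T + 2 * R) := by
  have hB : 0 ≤ B := (abs_nonneg _).trans (hG 0 0 ⟨le_rfl, hT⟩)
  refine norm2_le (by positivity) fun x t ht => ?_
  by_cases hx : |x| ≤ t + R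
  · rw [abs_mul, mul_comm]
    exact mul_le_mul ((abs_Lop'_le_of_bound hG ht).trans (mul_le_mul_of_nonneg_left ht.2 hB))
      (abs_le.2 ⟨by linarith [ht.2], by linarith [abs_nonneg x, ht.2]⟩) (abs_nonneg _)
      (by positivity)
  · rw [Lop'_eq_zero_of_lt_abs hG_supp ht (not_le.1 hx), mul_zero, abs_zero]
    positivity

lemma norm1_Lop_le_of_envelope (hp : 1 < p) (hM : 0 ≤ M) (hT : 0 ≤ T) (hG0 : ∀ y s, 0 ≤ G y s)
    (hG : ∀ y s, s ∈ Icc 0 T → G y s ≤ M * coneEnvelope p R y s) :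
    norm1 T (Lop G) ≤ M * (T / (p - 1)) := by
  refine norm1_le (by positivity) fun x t ht =>
    (abs_Lop_le_of_envelope hp hM hG0 hG ht).trans ?_
  gcongr
  exact ht.2

lemma norm2_Lop'_le_of_envelope (hp : 1 < p) (hR : 0 ≤ R) (hM : 0 ≤ M) (hT : 0 ≤ T)
    (hG0 : ∀ y s, 0 ≤ G y s) (hG : ∀ y s, s ∈ Icc 0 T → G y s ≤ M * coneEnvelope p R y s)
    (hG_supp : ∀ y s, s ∈ Icc 0 T → s + R < |y| → G y s = 0) :
    norm2 R T (Lop' G) ≤ M * ((T + R) / (p - 1) + T) := by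
  refine norm2_le (by positivity) fun x t ht => ?_
  by_cases hx : |x| ≤ t + R
  · have hω : 0 ≤ t - |x| + 2 * R := by linarith
    rw [abs_of_nonneg (mul_nonneg hω (Lop'_nonneg hG0 ht.1))]
    refine (weight_mul_Lop'_le_of_envelope hp hM hG0 hG ht hω).trans ?_
    gcongr
    exacts [ht.2, ht.2]
  · rw [Lop'_eq_zero_of_lt_abs hG_supp ht (not_le.1 hx), mul_zero, abs_zero]
    positivity

end Estimates

section Nonlinearities

variable {p q r R T : ℝ} {u w : ℝ → ℝ → ℝ}

lemma rpow_mul_rpow_le_coneEnvelope (hp : 0 < p) (hq : 0 ≤ q) (hR : 1 ≤ R)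
    (hu : IsConeSupported R T u) (hw : IsConeSupported R T w) {y s : ℝ} (hs : s ∈ Icc 0 T) :
    |w y s| ^ p * |u y s| ^ q ≤ norm2 R T w ^ p * norm1 T u ^ q * coneEnvelope p R y s := by
  have hW := norm2_nonneg (R := R) (T := T) (v := w)
  have hA := norm1_nonneg (T := T) (v := u)
  by_cases hy : |y| ≤ s + R
  · have hω : 1 ≤ s - |y| + 2 * R := by linarith [hs.1]
    have hω0 : 0 < s - |y| + 2 * R := by linarith
    have hwy : |w y s| ≤ norm2 R T w / (s - |y| + 2 * R) := by
      rw [le_div_iff₀ hω0, mul_comm]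
      simpa only [abs_mul, abs_of_pos hω0] using
        hw.abs_weight_mul_le_norm2 (x := y) (by linarith) hs
    calc |w y s| ^ p * |u y s| ^ q ≤ (norm2 R T w / (s - |y| + 2 * R)) ^ p * norm1 T u ^ q := by
          gcongr
          exact hu.abs_le_norm1 hs
      _ = norm2 R T w ^ p * norm1 T u ^ q * (s - |y| + 2 * R) ^ (-p) := by
          rw [Real.div_rpow hW hω0.le, Real.rpow_neg hω0.le]
          ring
      _ ≤ norm2 R T w ^ p * norm1 T u ^ q * coneEnvelope p R y s := by
          gcongr
          exact coneEnvelope.rpow_weight_le hω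
  · rw [hw.eq_zero y s hs (not_le.1 hy), abs_zero, Real.zero_rpow hp.ne', zero_mul]
    exact mul_nonneg (by positivity) (coneEnvelope.nonneg _ _ _ _)

lemma norm1_Lop_rpow_mul_rpow_le (hp : 1 < p) (hq : 0 ≤ q) (hR : 1 ≤ R) (hT : 0 ≤ T)
    (hu : IsConeSupported R T u) (hw : IsConeSupported R T w) :
    norm1 T (Lop fun y s => |w y s| ^ p * |u y s| ^ q)
      ≤ norm2 R T w ^ p * norm1 T u ^ q * (T / (p - 1)) :=
  norm1_Lop_le_of_envelope hp (mul_nonneg (Real.rpow_nonneg norm2_nonneg _)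
    (Real.rpow_nonneg norm1_nonneg _)) hT (fun _ _ => by positivity)
    fun _ _ hs => rpow_mul_rpow_le_coneEnvelope (by linarith) hq hR hu hw hs

lemma norm2_Lop'_rpow_mul_rpow_le (hp : 1 < p) (hq : 0 ≤ q) (hR : 1 ≤ R) (hT : 0 ≤ T)
    (hu : IsConeSupported R T u) (hw : IsConeSupported R T w) :
    norm2 R T (Lop' fun y s => |w y s| ^ p * |u y s| ^ q)
      ≤ norm2 R T w ^ p * norm1 T u ^ q * ((T + R) / (p - 1) + T) :=
  norm2_Lop'_le_of_envelope hp (by linarith) (mul_nonneg (Real.rpow_nonneg norm2_nonneg _)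
    (Real.rpow_nonneg norm1_nonneg _)) hT (fun _ _ => by positivity)
    (fun _ _ hs => rpow_mul_rpow_le_coneEnvelope (by linarith) hq hR hu hw hs)
    fun y s hs hy => by
      rw [hw.eq_zero y s hs hy, abs_zero, Real.zero_rpow (by linarith), zero_mul]

lemma norm1_Lop'_rpow_mul_rpow_le (hp : 1 < p) (hq : 0 ≤ q) (hR : 1 ≤ R) (hT : 0 ≤ T)
    (hu : IsConeSupported R T u) (hw : IsConeSupported R T w) :
    norm1 T (Lop' fun y s => |w y s| ^ p * |u y s| ^ q)
      ≤ 2 * (norm2 R T w ^ p * norm1 T u ^ q) * T := by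
  refine norm1_Lop'_le_of_bound hT fun y s hs => ?_
  rw [abs_of_nonneg (by positivity)]
  have hM : 0 ≤ norm2 R T w ^ p * norm1 T u ^ q :=
    mul_nonneg (Real.rpow_nonneg norm2_nonneg _) (Real.rpow_nonneg norm1_nonneg _)
  nlinarith [rpow_mul_rpow_le_coneEnvelope (y := y) (zero_lt_one.trans hp) hq hR hu hw hs,
    coneEnvelope.le_two (R := R) (zero_le_one.trans hp.le) y s]

lemma abs_rpow_le_norm1_rpow (hr : 0 ≤ r) (hu : IsConeSupported R T u) {y s : ℝ}
    (hs : s ∈ Icc 0 T) : |(|u y s| ^ r)| ≤ norm1 T u ^ r := by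
  rw [abs_of_nonneg (by positivity)]
  exact Real.rpow_le_rpow (abs_nonneg _) (hu.abs_le_norm1 hs) hr

lemma norm1_Lop_rpow_le (hr : 0 ≤ r) (hT : 0 ≤ T) (hu : IsConeSupported R T u) :
    norm1 T (Lop fun y s => |u y s| ^ r) ≤ norm1 T u ^ r * T ^ 2 :=
  norm1_Lop_le_of_bound hT fun _ _ hs => abs_rpow_le_norm1_rpow hr hu hs

lemma norm1_Lop'_rpow_le (hr : 0 ≤ r) (hT : 0 ≤ T) (hu : IsConeSupported R T u) :
    norm1 T (Lop' fun y s => |u y s| ^ r) ≤ norm1 T u ^ r * T :=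
  norm1_Lop'_le_of_bound hT fun _ _ hs => abs_rpow_le_norm1_rpow hr hu hs

lemma norm2_Lop'_rpow_le (hr : 0 < r) (hR : 0 ≤ R) (hT : 0 ≤ T) (hu : IsConeSupported R T u) :
    norm2 R T (Lop' fun y s => |u y s| ^ r) ≤ norm1 T u ^ r * T * (T + 2 * R) :=
  norm2_Lop'_le_of_bound hR hT (fun _ _ hs => abs_rpow_le_norm1_rpow hr.le hu hs)
    fun y s hs hy => by rw [hu.eq_zero y s hs hy, abs_zero, Real.zero_rpow hr.ne']

end Nonlinearities

/-- Proposition 3.1: a priori estimates in the weighted `L^∞` spaces. -/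
theorem stmt5 (p q r R : ℝ) (hp : 1 < p) (hq : 1 < q) (hr : 1 < r) (hR : 1 ≤ R) :
    ∃ C > (0:ℝ), ∀ T : ℝ, 0 < T → ∀ u w : ℝ → ℝ → ℝ,
      ContinuousOn (fun z : ℝ × ℝ => u z.1 z.2) ((univ : Set ℝ) ×ˢ Icc 0 T) →
      ContinuousOn (fun z : ℝ × ℝ => w z.1 z.2) ((univ : Set ℝ) ×ˢ Icc 0 T) →
      (∀ x t : ℝ, t ∈ Icc (0:ℝ) T → t + R < |x| → u x t = 0 ∧ w x t = 0) →
      norm1 T (Lop (fun y s => |w y s| ^ p * |u y s| ^ q)) ≤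
        C * norm2 R T w ^ p * norm1 T u ^ q * (T + R) ∧
      norm1 T (Lop (fun y s => |u y s| ^ r)) ≤ C * norm1 T u ^ r * (T + R) ^ (2:ℝ) ∧
      norm2 R T (Lop' (fun y s => |w y s| ^ p * |u y s| ^ q)) ≤
        C * norm2 R T w ^ p * norm1 T u ^ q * (T + R) ∧
      norm2 R T (Lop' (fun y s => |u y s| ^ r)) ≤ C * norm1 T u ^ r * (T + R) ^ (2:ℝ) ∧
      norm1 T (Lop' (fun y s => |w y s| ^ p * |u y s| ^ q)) ≤
        C * norm2 R T w ^ p * norm1 T u ^ q * (T + R) ∧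
      norm1 T (Lop' (fun y s => |u y s| ^ r)) ≤ C * norm1 T u ^ r * (T + R) ^ (2:ℝ) := by
  have hp1 : 0 < p - 1 := sub_pos.2 hp
  have hR0 : 0 ≤ R := by linarith
  refine ⟨2 + 1 / (p - 1), by positivity, fun T hT u w hcu hcw hsupp => ?_⟩
  have hu : IsConeSupported R T u := ⟨hcu, fun x t ht hx => (hsupp x t ht hx).1⟩
  have hw : IsConeSupported R T w := ⟨hcw, fun x t ht hx => (hsupp x t ht hx).2⟩
  have hM : 0 ≤ norm2 R T w ^ p * norm1 T u ^ q :=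
    mul_nonneg (Real.rpow_nonneg norm2_nonneg _) (Real.rpow_nonneg norm1_nonneg _)
  have hB : 0 ≤ norm1 T u ^ r := Real.rpow_nonneg norm1_nonneg _
  have hc : 0 ≤ 1 / (p - 1) := by positivity
  have hscale {X : ℝ} (K L : ℝ) (hX : 0 ≤ X) (hK : K ≤ (2 + 1 / (p - 1)) * L) :
      X * K ≤ (2 + 1 / (p - 1)) * X * L :=
    (mul_le_mul_of_nonneg_left hK hX).trans_eq (by ring)
  rw [Real.rpow_two]
  refine ⟨?_, ?_, ?_, ?_, ?_, ?_⟩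
  · refine (norm1_Lop_rpow_mul_rpow_le hp (by linarith) hR hT.le hu hw).trans ?_
    linarith [hscale (T / (p - 1)) (T + R) hM (by rw [div_eq_mul_one_div T]; nlinarith)]
  · refine (norm1_Lop_rpow_le (by linarith) hT.le hu).trans ?_
    linarith [hscale (T ^ 2) ((T + R) ^ 2) hB (by nlinarith)]
  · refine (norm2_Lop'_rpow_mul_rpow_le hp (by linarith) hR hT.le hu hw).trans ?_
    linarith [hscale ((T + R) / (p - 1) + T) (T + R) hM
      (by rw [div_eq_mul_one_div (T + R)]; nlinarith)]
  · refine (norm2_Lop'_rpow_le (by linarith) hR0 hT.le hu).trans ?_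
    linarith [hscale (T * (T + 2 * R)) ((T + R) ^ 2) hB (by nlinarith)]
  · refine (norm1_Lop'_rpow_mul_rpow_le hp (by linarith) hR hT.le hu hw).trans ?_
    linarith [hscale (2 * T) (T + R) hM (by nlinarith)]
  · refine (norm1_Lop'_rpow_le (by linarith) hT.le hu).trans ?_
    linarith [hscale T ((T + R) ^ 2) hB (by nlinarith)]

end
end

section
/- Let $p,q,r>1$, $T>0$, $R\ge1$, and let $U,W\in C(\mathbf{R}\times[0,T])$ vanish for $|x|>t+R$. Then there exists a constant $C>0$ independent of $T$ such that: $\|L(|W|^p|U|^q)\|_3\le C\|W\|_4^p\|U\|_3^q(T+R)^{p+q}$; $\|L(|U|^r)\|_3\le C\|U\|_3^r(T+R)^{r+1}$; $\|L'(|W|^p|U|^q)\|_4\le C\|W\|_4^p\|U\|_3^q(T+R)^{p+q}$; $\|L'(|U|^r)\|_4\le C\|U\|_3^r(T+R)^{r+1}$; $\|L'(|W|^p|U|^q)\|_3\le C\|W\|_4^p\|U\|_3^q(T+R)^{p+q}$; and $\|L'(|U|^r)\|_3\le C\|U\|_3^r(T+R)^{r+1}$. -/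
/-!
At time `s` both nonlinearities are bounded by a constant `c₁`, plus a constant `c₂` on the
layer `s - R < |y| ≤ s + R` of the support that lies outside `D`. For `|W|^p |U|^q` this holds
with `c₁ ≈ ‖W‖₄^p ‖U‖₃^q (T+R)^q`, because the weight of `‖·‖₄` is `1` on `D`, and with
`c₂ ≈ ‖W‖₄^p ‖U‖₃^q (T+R)^(p+q)`; for `|U|^r` one takes `c₁ ≈ ‖U‖₃^r (T+R)^r` and `c₂ = 0`.
Continuity and the support condition serve only to make the suprema finite, so that the norms
bound the functions pointwise.

The layer has measure `4R`, so `|L v (x, t)| ≤ (c₁ t + 2R c₂) t`, and the weight `(t+|x|+R)⁻¹`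
absorbs one factor `t`. The same absorption bounds `L' v` outside `D`. Inside `D` each
characteristic through `(x, t)` crosses the layer during a time interval of length `R` only, so
there `|L' v (x, t)| ≤ c₁ t + 2R c₂` needs no weight.
-/

open Set MeasureTheory

noncomputable section

/-- The weighted sup-norm `‖·‖₃` with weight `(t + |x| + R)⁻¹`. -/
def norm3 (R T : ℝ) (U : ℝ → ℝ → ℝ) : ℝ :=
  ⨆ z : ℝ × ↥(Icc (0:ℝ) T), ((z.2 : ℝ) + |z.1| + R)⁻¹ * |U z.1 (z.2 : ℝ)|

/-- The weight `χ_D + (1 - χ_D)(t + |x| + R)⁻¹` where `D = {t - |x| ≥ R}`. -/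
def weight4 (R x t : ℝ) : ℝ := if R ≤ t - |x| then 1 else (t + |x| + R)⁻¹

/-- The weighted sup-norm `‖·‖₄`. -/
def norm4 (R T : ℝ) (W : ℝ → ℝ → ℝ) : ℝ :=
  ⨆ z : ℝ × ↥(Icc (0:ℝ) T), weight4 R z.1 (z.2 : ℝ) * |W z.1 (z.2 : ℝ)|

/-- The plain sup-norm `‖·‖_∞` over `ℝ × [0,T]`. -/
def normInf (T : ℝ) (U : ℝ → ℝ → ℝ) : ℝ :=
  ⨆ z : ℝ × ↥(Icc (0:ℝ) T), |U z.1 (z.2 : ℝ)|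

lemma norm_intervalIntegral_le_of_le_add_indicator {F : ℝ → ℝ} {a b c₁ c₂ m : ℝ} {E : Set ℝ}
    (hab : a ≤ b) (hE : MeasurableSet E) (hEm : volume E ≤ ENNReal.ofReal m) (hm : 0 ≤ m)
    (hc₂ : 0 ≤ c₂) (hF : ∀ s ∈ Ioc a b, ‖F s‖ ≤ c₁ + c₂ * E.indicator 1 s) :
    ‖∫ s in a..b, F s‖ ≤ c₁ * (b - a) + c₂ * m := by
  have hind : IntervalIntegrable (E.indicator 1) volume a b :=
    ((integrableOn_const (C := (1:ℝ)) (hEm.trans_lt ENNReal.ofReal_lt_top).ne).integrable_indicator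
      hE).intervalIntegrable
  have hvol : ∫ s in a..b, E.indicator (1 : ℝ → ℝ) s ≤ m := by
    rw [intervalIntegral.integral_of_le hab, integral_indicator_one hE]
    exact ENNReal.toReal_le_of_le_ofReal hm ((Measure.restrict_apply_le _ _).trans hEm)
  calc ‖∫ s in a..b, F s‖ ≤ ∫ s in a..b, (c₁ + c₂ * E.indicator 1 s) :=
        intervalIntegral.norm_integral_le_of_norm_le hab (ae_of_all _ hF)
          (intervalIntegrable_const.add (hind.const_mul c₂))
    _ = c₁ * (b - a) + c₂ * ∫ s in a..b, E.indicator 1 s := by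
        rw [intervalIntegral.integral_add intervalIntegrable_const (hind.const_mul c₂),
          intervalIntegral.integral_const, intervalIntegral.integral_const_mul, smul_eq_mul,
          mul_comm]
    _ ≤ c₁ * (b - a) + c₂ * m := by gcongr

/-- The points of the support `|y| ≤ s + R` at time `s` that lie outside `D`. -/
def supportLayer (R s : ℝ) : Set ℝ := {y | s - R < |y| ∧ |y| ≤ s + R}

def HasLayerBound (R T c₁ c₂ : ℝ) (v : ℝ → ℝ → ℝ) : Prop :=
  ∀ s ∈ Icc 0 T, ∀ y, |v y s| ≤ c₁ + c₂ * (supportLayer R s).indicator 1 y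

section Weights

variable {R x t : ℝ}

lemma weight4_nonneg (h : 0 ≤ t + |x| + R) : 0 ≤ weight4 R x t := by
  unfold weight4; split_ifs
  exacts [zero_le_one, inv_nonneg.2 h]

lemma weight4_le_one (h : 1 ≤ t + |x| + R) : weight4 R x t ≤ 1 := by
  unfold weight4; split_ifs
  exacts [le_rfl, inv_le_one_of_one_le₀ h]

lemma inv_le_weight4 (h : 1 ≤ t + |x| + R) : (t + |x| + R)⁻¹ ≤ weight4 R x t := by
  unfold weight4; split_ifs
  exacts [inv_le_one_of_one_le₀ h, le_rfl]

end Weights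

section SupNorms

variable {R T B : ℝ} {F : ℝ → ℝ → ℝ}

lemma norm3_nonneg (hR : 0 ≤ R) : 0 ≤ norm3 R T F :=
  Real.iSup_nonneg fun z =>
    mul_nonneg (inv_nonneg.2 (by linarith [abs_nonneg z.1, z.2.2.1])) (abs_nonneg _)

lemma norm4_nonneg (hR : 0 ≤ R) : 0 ≤ norm4 R T F :=
  Real.iSup_nonneg fun z =>
    mul_nonneg (weight4_nonneg (by linarith [abs_nonneg z.1, z.2.2.1])) (abs_nonneg _)

lemma norm3_le (hT : 0 ≤ T) (h : ∀ x, ∀ t ∈ Icc 0 T, (t + |x| + R)⁻¹ * |F x t| ≤ B) :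
    norm3 R T F ≤ B :=
  haveI : Nonempty (Icc (0:ℝ) T) := ⟨⟨0, left_mem_Icc.2 hT⟩⟩
  ciSup_le fun z => h z.1 z.2 z.2.2

lemma norm4_le (hT : 0 ≤ T) (h : ∀ x, ∀ t ∈ Icc 0 T, weight4 R x t * |F x t| ≤ B) :
    norm4 R T F ≤ B :=
  haveI : Nonempty (Icc (0:ℝ) T) := ⟨⟨0, left_mem_Icc.2 hT⟩⟩
  ciSup_le fun z => h z.1 z.2 z.2.2

lemma norm3_le_of_weight4 (hR : 1 ≤ R) (hT : 0 ≤ T)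
    (h : ∀ x, ∀ t ∈ Icc 0 T, weight4 R x t * |F x t| ≤ B) : norm3 R T F ≤ B :=
  norm3_le hT fun x t ht =>
    (mul_le_mul_of_nonneg_right (inv_le_weight4 (by linarith [abs_nonneg x, ht.1]))
      (abs_nonneg _)).trans (h x t ht)

lemma exists_abs_le_of_continuousOn
    (hF : ContinuousOn (fun z : ℝ × ℝ => F z.1 z.2) ((univ : Set ℝ) ×ˢ Icc 0 T))
    (hzero : ∀ x t : ℝ, t ∈ Icc (0:ℝ) T → t + R < |x| → F x t = 0) :
    ∃ M, ∀ x, ∀ t ∈ Icc 0 T, |F x t| ≤ M := by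
  obtain ⟨M, hM⟩ := (isCompact_Icc.prod isCompact_Icc).exists_bound_of_continuousOn
    (hF.mono (prod_mono (subset_univ (Icc (-(T + R)) (T + R))) le_rfl))
  refine ⟨max M 0, fun x t ht => ?_⟩
  by_cases hx : |x| ≤ T + R
  · exact (hM (x, t) ⟨abs_le.1 hx, ht⟩).trans (le_max_left _ _)
  · rw [hzero x t ht (by linarith [ht.2]), abs_zero]
    exact le_max_right _ _

lemma mul_abs_le_iSup {w : ℝ → ℝ → ℝ} (hw : ∀ x, ∀ t ∈ Icc 0 T, w x t ≤ 1)
    (hF : ∃ M, ∀ x, ∀ t ∈ Icc 0 T, |F x t| ≤ M) {x t : ℝ} (ht : t ∈ Icc 0 T) :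
    w x t * |F x t| ≤ ⨆ z : ℝ × Icc (0:ℝ) T, w z.1 z.2 * |F z.1 z.2| := by
  obtain ⟨M, hM⟩ := hF
  refine le_ciSup (f := fun z : ℝ × Icc (0:ℝ) T => w z.1 z.2 * |F z.1 z.2|) ⟨M, ?_⟩ (x, ⟨t, ht⟩)
  rintro _ ⟨z, rfl⟩
  exact (mul_le_of_le_one_left (abs_nonneg _) (hw z.1 z.2 z.2.2)).trans (hM z.1 z.2 z.2.2)

lemma abs_le_two_mul_of_eq_zero {M s : ℝ} (hM : 0 ≤ M) (hsR : 0 ≤ s + R)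
    (hsT : s ≤ T) (hF : ∀ y, |F y s| ≤ M * (s + |y| + R))
    (hzero : ∀ y, s + R < |y| → F y s = 0) (y : ℝ) : |F y s| ≤ 2 * M * (T + R) := by
  by_cases hy : s + R < |y|
  · rw [hzero y hy, abs_zero]
    exact mul_nonneg (mul_nonneg zero_le_two hM) (by linarith)
  · calc |F y s| ≤ M * (s + |y| + R) := hF y
      _ ≤ M * (2 * (T + R)) := by gcongr; linarith
      _ = 2 * M * (T + R) := by ring

variable {x t : ℝ}

lemma abs_le_norm3_mul (hR : 1 ≤ R) (hF : ∃ M, ∀ x, ∀ t ∈ Icc 0 T, |F x t| ≤ M)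
    (ht : t ∈ Icc 0 T) : |F x t| ≤ norm3 R T F * (t + |x| + R) := by
  have h := mul_abs_le_iSup (w := fun x t => (t + |x| + R)⁻¹) (x := x)
    (fun x t ht => inv_le_one_of_one_le₀ (by linarith [abs_nonneg x, ht.1])) hF ht
  rw [inv_mul_le_iff₀ (by linarith [abs_nonneg x, ht.1])] at h
  exact h.trans_eq (mul_comm _ _)

lemma weight4_mul_abs_le_norm4 (hR : 1 ≤ R) (hF : ∃ M, ∀ x, ∀ t ∈ Icc 0 T, |F x t| ≤ M)
    (ht : t ∈ Icc 0 T) : weight4 R x t * |F x t| ≤ norm4 R T F :=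
  mul_abs_le_iSup (w := weight4 R)
    (fun x t ht => weight4_le_one (by linarith [abs_nonneg x, ht.1])) hF ht

lemma abs_le_norm4_mul (hR : 1 ≤ R) (hF : ∃ M, ∀ x, ∀ t ∈ Icc 0 T, |F x t| ≤ M)
    (ht : t ∈ Icc 0 T) : |F x t| ≤ norm4 R T F * (t + |x| + R) := by
  have h1 : 1 ≤ t + |x| + R := by linarith [abs_nonneg x, ht.1]
  have h := (mul_le_mul_of_nonneg_right (inv_le_weight4 h1) (abs_nonneg _)).trans
    (weight4_mul_abs_le_norm4 hR hF ht)
  rw [inv_mul_le_iff₀ (by linarith)] at h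
  exact h.trans_eq (mul_comm _ _)

lemma abs_le_norm4_of_le_sub (hR : 1 ≤ R) (hF : ∃ M, ∀ x, ∀ t ∈ Icc 0 T, |F x t| ≤ M)
    (ht : t ∈ Icc 0 T) (hD : R ≤ t - |x|) : |F x t| ≤ norm4 R T F := by
  have h := weight4_mul_abs_le_norm4 (x := x) hR hF ht
  rwa [weight4, if_pos hD, one_mul] at h

lemma abs_le_two_mul_norm3 (hR : 1 ≤ R) (hF : ∃ M, ∀ x, ∀ t ∈ Icc 0 T, |F x t| ≤ M)
    (hzero : ∀ x t : ℝ, t ∈ Icc 0 T → t + R < |x| → F x t = 0) (ht : t ∈ Icc 0 T) (y : ℝ) :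
    |F y t| ≤ 2 * norm3 R T F * (T + R) :=
  abs_le_two_mul_of_eq_zero (norm3_nonneg (by linarith)) (by linarith [ht.1]) ht.2
    (fun _ => abs_le_norm3_mul hR hF ht) (fun y => hzero y t ht) y

lemma abs_le_two_mul_norm4 (hR : 1 ≤ R) (hF : ∃ M, ∀ x, ∀ t ∈ Icc 0 T, |F x t| ≤ M)
    (hzero : ∀ x t : ℝ, t ∈ Icc 0 T → t + R < |x| → F x t = 0) (ht : t ∈ Icc 0 T) (y : ℝ) :
    |F y t| ≤ 2 * norm4 R T F * (T + R) :=
  abs_le_two_mul_of_eq_zero (norm4_nonneg (by linarith)) (by linarith [ht.1]) ht.2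
    (fun _ => abs_le_norm4_mul hR hF ht) (fun y => hzero y t ht) y

end SupNorms

section Layer

variable {R s : ℝ}

lemma measurableSet_supportLayer : MeasurableSet (supportLayer R s) :=
  measurableSet_Ioc.preimage continuous_abs.measurable

lemma volume_supportLayer_le (hR : 0 ≤ R) : volume (supportLayer R s) ≤ ENNReal.ofReal (4 * R) := by
  have hsub : supportLayer R s ⊆ Icc (s - R) (s + R) ∪ Icc (-(s + R)) (-(s - R)) := by
    intro y ⟨h₁, h₂⟩
    rcases le_or_gt 0 y with hy | hy
    · rw [abs_of_nonneg hy] at h₁ h₂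
      exact Or.inl ⟨h₁.le, h₂⟩
    · rw [abs_of_neg hy] at h₁ h₂
      exact Or.inr ⟨by linarith, by linarith⟩
  calc volume (supportLayer R s)
      ≤ volume (Icc (s - R) (s + R)) + volume (Icc (-(s + R)) (-(s - R))) :=
        (measure_mono hsub).trans (measure_union_le _ _)
    _ = ENNReal.ofReal (4 * R) := by
        rw [Real.volume_Icc, Real.volume_Icc, ← ENNReal.ofReal_add (by linarith) (by linarith)]
        ring_nf

lemma indicator_supportLayer_le {a y : ℝ} (ha : R ≤ a) (hy : |y| = |a - s|) :
    (supportLayer R s).indicator (1 : ℝ → ℝ) y ≤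
      (Icc ((a - R) / 2) ((a + R) / 2)).indicator 1 s := by
  refine indicator_apply_le' (fun ⟨h₁, h₂⟩ => ?_)
    fun _ => indicator_nonneg (fun _ _ => zero_le_one) _
  rw [hy] at h₁ h₂
  have hs : s ≤ a := by
    by_contra! hs
    rw [abs_of_neg (sub_neg.2 hs)] at h₁
    linarith
  rw [abs_of_nonneg (sub_nonneg.2 hs)] at h₁ h₂
  rw [indicator_of_mem (show s ∈ Icc ((a - R) / 2) ((a + R) / 2) from ⟨by linarith, by linarith⟩)]
  rfl

end Layer

section LayerBound

variable {R T c₁ c₂ : ℝ} {v : ℝ → ℝ → ℝ}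

lemma HasLayerBound.abs_Lop_le (h : HasLayerBound R T c₁ c₂ v) (hR : 0 ≤ R) (hc₁ : 0 ≤ c₁)
    (hc₂ : 0 ≤ c₂) {x t : ℝ} (ht : t ∈ Icc 0 T) :
    |Lop v x t| ≤ (c₁ * t + 2 * R * c₂) * t := by
  have hinner : ∀ s ∈ uIoc 0 t,
      ‖∫ y in (x - t + s)..(x + t - s), v y s‖ ≤ 2 * (c₁ * t + 2 * R * c₂) := by
    intro s hs
    rw [uIoc_of_le ht.1] at hs
    calc ‖∫ y in (x - t + s)..(x + t - s), v y s‖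
        ≤ c₁ * ((x + t - s) - (x - t + s)) + c₂ * (4 * R) :=
          norm_intervalIntegral_le_of_le_add_indicator (by linarith [hs.2])
            measurableSet_supportLayer (volume_supportLayer_le hR) (by linarith) hc₂
            fun y _ => h s ⟨hs.1.le, hs.2.trans ht.2⟩ y
      _ ≤ 2 * (c₁ * t + 2 * R * c₂) := by nlinarith [mul_nonneg hc₁ hs.1.le]
  have houter := intervalIntegral.norm_integral_le_of_norm_le_const hinner
  rw [Real.norm_eq_abs, sub_zero, abs_of_nonneg ht.1] at houter
  rw [Lop, abs_mul, abs_of_pos one_half_pos]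
  linarith

lemma HasLayerBound.abs_Lop'_le (h : HasLayerBound R T c₁ c₂ v) (hc₂ : 0 ≤ c₂) {x t : ℝ}
    (ht : t ∈ Icc 0 T) : |Lop' v x t| ≤ (c₁ + c₂) * t := by
  have hpoint : ∀ s ∈ Icc 0 T, ∀ y, |v y s| ≤ c₁ + c₂ := fun s hs y =>
    (h s hs y).trans (add_le_add_right (mul_le_of_le_one_right hc₂
      (indicator_apply_le' (f := (1 : ℝ → ℝ)) (fun _ => le_rfl) fun _ => zero_le_one)) c₁)
  have hint : ∀ s ∈ uIoc 0 t, ‖v (x + t - s) s + v (x - t + s) s‖ ≤ 2 * (c₁ + c₂) := by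
    intro s hs
    rw [uIoc_of_le ht.1] at hs
    have hsT : s ∈ Icc 0 T := ⟨hs.1.le, hs.2.trans ht.2⟩
    calc ‖v (x + t - s) s + v (x - t + s) s‖ ≤ |v (x + t - s) s| + |v (x - t + s) s| :=
          norm_add_le _ _
      _ ≤ 2 * (c₁ + c₂) := by linarith [hpoint s hsT (x + t - s), hpoint s hsT (x - t + s)]
  have hbound := intervalIntegral.norm_integral_le_of_norm_le_const hint
  rw [Real.norm_eq_abs, sub_zero, abs_of_nonneg ht.1] at hbound
  rw [Lop', abs_mul, abs_of_pos one_half_pos]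
  linarith

lemma HasLayerBound.abs_Lop'_le_of_le_sub (h : HasLayerBound R T c₁ c₂ v) (hR : 0 ≤ R)
    (hc₂ : 0 ≤ c₂) {x t : ℝ} (ht : t ∈ Icc 0 T) (hD : R ≤ t - |x|) :
    |Lop' v x t| ≤ c₁ * t + 2 * R * c₂ := by
  set A₁ := Icc ((x + t - R) / 2) ((x + t + R) / 2)
  set A₂ := Icc ((t - x - R) / 2) ((t - x + R) / 2)
  have hA : volume (A₁ ∪ A₂) ≤ ENNReal.ofReal (2 * R) := by
    refine (measure_union_le _ _).trans ?_
    rw [Real.volume_Icc, Real.volume_Icc, ← ENNReal.ofReal_add (by linarith) (by linarith)]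
    exact ENNReal.ofReal_le_ofReal (by linarith)
  have hint : ∀ s ∈ Ioc 0 t,
      ‖v (x + t - s) s + v (x - t + s) s‖ ≤ 2 * c₁ + 2 * c₂ * (A₁ ∪ A₂).indicator 1 s := by
    intro s hs
    have hsT : s ∈ Icc 0 T := ⟨hs.1.le, hs.2.trans ht.2⟩
    have h₁ : |v (x + t - s) s| ≤ c₁ + c₂ * (A₁ ∪ A₂).indicator 1 s := by
      refine (h s hsT _).trans ?_
      gcongr
      exact (indicator_supportLayer_le (by linarith [neg_abs_le x]) rfl).trans
        (indicator_le_indicator_of_subset subset_union_left (fun _ => zero_le_one) s)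
    have h₂ : |v (x - t + s) s| ≤ c₁ + c₂ * (A₁ ∪ A₂).indicator 1 s := by
      refine (h s hsT _).trans ?_
      gcongr
      refine (indicator_supportLayer_le (by linarith [le_abs_self x]) ?_).trans
        (indicator_le_indicator_of_subset subset_union_right (fun _ => zero_le_one) s)
      rw [← abs_neg]
      ring_nf
    calc ‖v (x + t - s) s + v (x - t + s) s‖ ≤ |v (x + t - s) s| + |v (x - t + s) s| :=
          norm_add_le _ _
      _ ≤ _ := by linarith
  have hbound := norm_intervalIntegral_le_of_le_add_indicator ht.1
    (measurableSet_Icc.union measurableSet_Icc) hA (by linarith) (by linarith) hint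
  rw [Real.norm_eq_abs] at hbound
  rw [Lop', abs_mul, abs_of_pos one_half_pos]
  linarith

lemma HasLayerBound.weight4_mul_abs_Lop'_le (h : HasLayerBound R T c₁ c₂ v) (hR : 1 ≤ R)
    (hc₁ : 0 ≤ c₁) (hc₂ : 0 ≤ c₂) {x t : ℝ} (ht : t ∈ Icc 0 T) :
    weight4 R x t * |Lop' v x t| ≤ c₁ * (T + R) + 2 * R * c₂ := by
  by_cases hD : R ≤ t - |x|
  · rw [weight4, if_pos hD, one_mul]
    calc |Lop' v x t| ≤ c₁ * t + 2 * R * c₂ := h.abs_Lop'_le_of_le_sub (by linarith) hc₂ ht hD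
      _ ≤ c₁ * (T + R) + 2 * R * c₂ := by gcongr; linarith [ht.2]
  · rw [weight4, if_neg hD, inv_mul_le_iff₀ (by linarith [abs_nonneg x, ht.1])]
    have hc : c₁ + c₂ ≤ c₁ * (T + R) + 2 * R * c₂ :=
      add_le_add (le_mul_of_one_le_right hc₁ (by linarith [ht.1, ht.2]))
        (le_mul_of_one_le_left hc₂ (by linarith))
    calc |Lop' v x t| ≤ (c₁ + c₂) * t := h.abs_Lop'_le hc₂ ht
      _ ≤ (c₁ * (T + R) + 2 * R * c₂) * (t + |x| + R) :=
        mul_le_mul hc (by linarith [abs_nonneg x]) ht.1 (by linarith)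
      _ = _ := mul_comm _ _

lemma HasLayerBound.norm3_Lop_le (h : HasLayerBound R T c₁ c₂ v) (hR : 1 ≤ R) (hT : 0 ≤ T)
    (hc₁ : 0 ≤ c₁) (hc₂ : 0 ≤ c₂) : norm3 R T (Lop v) ≤ c₁ * (T + R) + 2 * R * c₂ :=
  norm3_le hT fun x t ht => by
    rw [inv_mul_le_iff₀ (by linarith [abs_nonneg x, ht.1])]
    calc |Lop v x t| ≤ (c₁ * t + 2 * R * c₂) * t := h.abs_Lop_le (by linarith) hc₁ hc₂ ht
      _ ≤ (c₁ * (T + R) + 2 * R * c₂) * (t + |x| + R) :=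
        mul_le_mul (by gcongr; linarith [ht.2]) (by linarith [abs_nonneg x]) ht.1
          (by nlinarith)
      _ = _ := mul_comm _ _

lemma HasLayerBound.norm4_Lop'_le (h : HasLayerBound R T c₁ c₂ v) (hR : 1 ≤ R) (hT : 0 ≤ T)
    (hc₁ : 0 ≤ c₁) (hc₂ : 0 ≤ c₂) : norm4 R T (Lop' v) ≤ c₁ * (T + R) + 2 * R * c₂ :=
  norm4_le hT fun _ _ ht => h.weight4_mul_abs_Lop'_le hR hc₁ hc₂ ht

lemma HasLayerBound.norm3_Lop'_le (h : HasLayerBound R T c₁ c₂ v) (hR : 1 ≤ R) (hT : 0 ≤ T)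
    (hc₁ : 0 ≤ c₁) (hc₂ : 0 ≤ c₂) : norm3 R T (Lop' v) ≤ c₁ * (T + R) + 2 * R * c₂ :=
  norm3_le_of_weight4 hR hT fun _ _ ht => h.weight4_mul_abs_Lop'_le hR hc₁ hc₂ ht

end LayerBound

section Nonlinearities

variable {R T A : ℝ} {U : ℝ → ℝ → ℝ}

lemma hasLayerBound_rpow_mul_rpow {W : ℝ → ℝ → ℝ} {p q B B₀ : ℝ} (hp : 0 ≤ p) (hq : 0 < q)
    (hB₀ : 0 ≤ B₀) (hU : ∀ s ∈ Icc 0 T, ∀ y, |U y s| ≤ A)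
    (hW : ∀ s ∈ Icc 0 T, ∀ y, |W y s| ≤ B) (hWD : ∀ s ∈ Icc 0 T, ∀ y, R ≤ s - |y| → |W y s| ≤ B₀)
    (hUzero : ∀ y s : ℝ, s ∈ Icc 0 T → s + R < |y| → U y s = 0) :
    HasLayerBound R T (B₀ ^ p * A ^ q) (B ^ p * A ^ q) (fun y s => |W y s| ^ p * |U y s| ^ q) := by
  intro s hs y
  dsimp only
  have hA : 0 ≤ A := (abs_nonneg _).trans (hU s hs y)
  have hB : 0 ≤ B := (abs_nonneg _).trans (hW s hs y)
  have hUq : |U y s| ^ q ≤ A ^ q := Real.rpow_le_rpow (abs_nonneg _) (hU s hs y) hq.le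
  have hI : 0 ≤ (supportLayer R s).indicator (1 : ℝ → ℝ) y :=
    indicator_nonneg (fun _ _ => zero_le_one) y
  rw [abs_of_nonneg (by positivity)]
  by_cases hD : R ≤ s - |y|
  · calc |W y s| ^ p * |U y s| ^ q ≤ B₀ ^ p * A ^ q :=
          mul_le_mul (Real.rpow_le_rpow (abs_nonneg _) (hWD s hs y hD) hp) hUq (by positivity)
            (Real.rpow_nonneg hB₀ p)
      _ ≤ _ := le_add_of_nonneg_right
          (mul_nonneg (mul_nonneg (Real.rpow_nonneg hB p) (Real.rpow_nonneg hA q)) hI)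
  by_cases hy : s + R < |y|
  · rw [hUzero y s hs hy, abs_zero, Real.zero_rpow hq.ne', mul_zero]
    exact add_nonneg (mul_nonneg (Real.rpow_nonneg hB₀ p) (Real.rpow_nonneg hA q))
      (mul_nonneg (mul_nonneg (Real.rpow_nonneg hB p) (Real.rpow_nonneg hA q)) hI)
  · rw [indicator_of_mem (show y ∈ supportLayer R s from ⟨by linarith, by linarith⟩),
      Pi.one_apply, mul_one]
    calc |W y s| ^ p * |U y s| ^ q ≤ B ^ p * A ^ q :=
          mul_le_mul (Real.rpow_le_rpow (abs_nonneg _) (hW s hs y) hp) hUq (by positivity)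
            (Real.rpow_nonneg hB p)
      _ ≤ _ := le_add_of_nonneg_left (mul_nonneg (Real.rpow_nonneg hB₀ p) (Real.rpow_nonneg hA q))

lemma hasLayerBound_rpow {r : ℝ} (hr : 0 ≤ r) (hU : ∀ s ∈ Icc 0 T, ∀ y, |U y s| ≤ A) :
    HasLayerBound R T (A ^ r) 0 (fun y s => |U y s| ^ r) := fun s hs y => by
  rw [zero_mul, add_zero, abs_of_nonneg (by positivity)]
  exact Real.rpow_le_rpow (abs_nonneg _) (hU s hs y) hr

end Nonlinearities

lemma product_bound_le {p q R X a b C : ℝ} (hp : 1 ≤ p) (hX : 1 ≤ X) (ha : 0 ≤ a)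
    (hb : 0 ≤ b) (hC : (1 + 2 * R) * 2 ^ (p + q) ≤ C) :
    b ^ p * (2 * a * X) ^ q * X + 2 * R * ((2 * b * X) ^ p * (2 * a * X) ^ q) ≤
      C * b ^ p * a ^ q * X ^ (p + q) := by
  have hX₀ : 0 < X := by linarith
  have hP : 0 ≤ b ^ p * a ^ q := mul_nonneg (Real.rpow_nonneg hb p) (Real.rpow_nonneg ha q)
  have h₂ : (2 : ℝ) ^ q ≤ 2 ^ (p + q) := Real.rpow_le_rpow_of_exponent_le one_le_two (by linarith)
  have hXq : X ^ q * X ≤ X ^ (p + q) := by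
    rw [← Real.rpow_add_one hX₀.ne']
    exact Real.rpow_le_rpow_of_exponent_le hX (by linarith)
  calc b ^ p * (2 * a * X) ^ q * X + 2 * R * ((2 * b * X) ^ p * (2 * a * X) ^ q)
      = 2 ^ q * (b ^ p * a ^ q) * (X ^ q * X) +
          2 * R * 2 ^ (p + q) * (b ^ p * a ^ q) * X ^ (p + q) := by
        rw [Real.mul_rpow (by positivity) hX₀.le, Real.mul_rpow (by positivity) hX₀.le,
          Real.mul_rpow zero_le_two ha, Real.mul_rpow zero_le_two hb, Real.rpow_add two_pos,
          Real.rpow_add hX₀]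
        ring
    _ ≤ 2 ^ (p + q) * (b ^ p * a ^ q) * X ^ (p + q) +
          2 * R * 2 ^ (p + q) * (b ^ p * a ^ q) * X ^ (p + q) := by gcongr
    _ = (1 + 2 * R) * 2 ^ (p + q) * (b ^ p * a ^ q) * X ^ (p + q) := by ring
    _ ≤ C * (b ^ p * a ^ q) * X ^ (p + q) := by gcongr
    _ = C * b ^ p * a ^ q * X ^ (p + q) := by ring

lemma power_bound_le {r R X a C : ℝ} (hX : 0 < X) (ha : 0 ≤ a) (hC : 2 ^ r ≤ C) :
    (2 * a * X) ^ r * X + 2 * R * 0 ≤ C * a ^ r * X ^ (r + 1) := by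
  calc (2 * a * X) ^ r * X + 2 * R * 0 = 2 ^ r * (a ^ r * X ^ (r + 1)) := by
        rw [Real.mul_rpow (by positivity) hX.le, Real.mul_rpow zero_le_two ha,
          Real.rpow_add_one hX.ne']
        ring
    _ ≤ C * (a ^ r * X ^ (r + 1)) :=
        mul_le_mul_of_nonneg_right hC (mul_nonneg (Real.rpow_nonneg ha r) (by positivity))
    _ = C * a ^ r * X ^ (r + 1) := by ring

/-- Proposition 5.2 (a priori estimates in the zero-mean weighted spaces). -/
theorem stmt7 (p q r R : ℝ) (hp : 1 < p) (hq : 1 < q) (hr : 1 < r) (hR : 1 ≤ R) :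
    ∃ C > (0:ℝ), ∀ T : ℝ, 0 < T → ∀ U W : ℝ → ℝ → ℝ,
      ContinuousOn (fun z : ℝ × ℝ => U z.1 z.2) ((univ : Set ℝ) ×ˢ Icc 0 T) →
      ContinuousOn (fun z : ℝ × ℝ => W z.1 z.2) ((univ : Set ℝ) ×ˢ Icc 0 T) →
      (∀ x t : ℝ, t ∈ Icc (0:ℝ) T → t + R < |x| → U x t = 0 ∧ W x t = 0) →
      norm3 R T (Lop (fun y s => |W y s| ^ p * |U y s| ^ q)) ≤
        C * norm4 R T W ^ p * norm3 R T U ^ q * (T + R) ^ (p + q) ∧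
      norm3 R T (Lop (fun y s => |U y s| ^ r)) ≤
        C * norm3 R T U ^ r * (T + R) ^ (r + 1) ∧
      norm4 R T (Lop' (fun y s => |W y s| ^ p * |U y s| ^ q)) ≤
        C * norm4 R T W ^ p * norm3 R T U ^ q * (T + R) ^ (p + q) ∧
      norm4 R T (Lop' (fun y s => |U y s| ^ r)) ≤
        C * norm3 R T U ^ r * (T + R) ^ (r + 1) ∧
      norm3 R T (Lop' (fun y s => |W y s| ^ p * |U y s| ^ q)) ≤
        C * norm4 R T W ^ p * norm3 R T U ^ q * (T + R) ^ (p + q) ∧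
      norm3 R T (Lop' (fun y s => |U y s| ^ r)) ≤
        C * norm3 R T U ^ r * (T + R) ^ (r + 1) := by
  have h2pq : (0 : ℝ) < 2 ^ (p + q) := by positivity
  have h2r : (0 : ℝ) < 2 ^ r := by positivity
  refine ⟨(1 + 2 * R) * (2 ^ (p + q) + 2 ^ r), by positivity, ?_⟩
  intro T hT U W hUc hWc hsupp
  have hU₀ : ∀ x t, t ∈ Icc 0 T → t + R < |x| → U x t = 0 := fun x t ht hx => (hsupp x t ht hx).1
  have hW₀ : ∀ x t, t ∈ Icc 0 T → t + R < |x| → W x t = 0 := fun x t ht hx => (hsupp x t ht hx).2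
  have hUbdd := exists_abs_le_of_continuousOn hUc hU₀
  have hWbdd := exists_abs_le_of_continuousOn hWc hW₀
  have hMU : 0 ≤ norm3 R T U := norm3_nonneg (by linarith)
  have hMW : 0 ≤ norm4 R T W := norm4_nonneg (by linarith)
  have hU : ∀ s ∈ Icc 0 T, ∀ y, |U y s| ≤ 2 * norm3 R T U * (T + R) :=
    fun _ hs => abs_le_two_mul_norm3 hR hUbdd hU₀ hs
  have hW : ∀ s ∈ Icc 0 T, ∀ y, |W y s| ≤ 2 * norm4 R T W * (T + R) :=
    fun _ hs => abs_le_two_mul_norm4 hR hWbdd hW₀ hs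
  have hA : 0 ≤ 2 * norm3 R T U * (T + R) := (abs_nonneg _).trans (hU 0 ⟨le_rfl, hT.le⟩ 0)
  have hB : 0 ≤ 2 * norm4 R T W * (T + R) := (abs_nonneg _).trans (hW 0 ⟨le_rfl, hT.le⟩ 0)
  have hprod := hasLayerBound_rpow_mul_rpow (p := p) (q := q) (by linarith) (by linarith) hMW
    hU hW (fun _ hs _ hD => abs_le_norm4_of_le_sub hR hWbdd hs hD) hU₀
  have hpow := hasLayerBound_rpow (R := R) (by linarith : 0 ≤ r) hU
  have hc₁ := mul_nonneg (Real.rpow_nonneg hMW p) (Real.rpow_nonneg hA q)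
  have hc₂ := mul_nonneg (Real.rpow_nonneg hB p) (Real.rpow_nonneg hA q)
  have hc := Real.rpow_nonneg hA r
  have hCprod := product_bound_le hp.le (by linarith : (1 : ℝ) ≤ T + R) hMU hMW
    (C := (1 + 2 * R) * (2 ^ (p + q) + 2 ^ r)) (by nlinarith)
  have hCpow := power_bound_le (by linarith : (0 : ℝ) < T + R) hMU (R := R)
    (C := (1 + 2 * R) * (2 ^ (p + q) + 2 ^ r)) (by nlinarith)
  exact ⟨(hprod.norm3_Lop_le hR hT.le hc₁ hc₂).trans hCprod,
    (hpow.norm3_Lop_le hR hT.le hc le_rfl).trans hCpow,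
    (hprod.norm4_Lop'_le hR hT.le hc₁ hc₂).trans hCprod,
    (hpow.norm4_Lop'_le hR hT.le hc le_rfl).trans hCpow,
    (hprod.norm3_Lop'_le hR hT.le hc₁ hc₂).trans hCprod,
    (hpow.norm3_Lop'_le hR hT.le hc le_rfl).trans hCpow⟩

end
end
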